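/- Let k ≥ 2 and let G be a graph with a list assignment L where |L(v)| = k for all v, and a matching assignment M_L. Let H be a subgraph of G whose vertices can be ordered v_1, ..., v_ℓ such that: (1) v_1 v_ℓ ∈ E(G); (2) given a DP-k-coloring of G − H, define A(v) ⊆ {v}×L(v) as the set of colors of v not matched to the chosen color of any colored neighbor in G − H; assume |A(v_1)| > |A(v_ℓ)| ≥ 1; (3) d(v_ℓ) ≤ k and v_ℓ has a neighbor in G − H; (4) for each 2 ≤ i ≤ ℓ−1, v_i has at most k−1 neighbors in G[{v_1,...,v_{i−1}}] ∪ (G − H). Then the DP-k-coloring of G − H extends to a DP-k-coloring of G. -/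

import Mathlib

/-- A matching assignment for a graph `G` with list assignment `L`:
for each edge `uv`, a (possibly empty) matching between `{u} × L u` and `{v} × L v`. -/
structure MatchingAssignment {V : Type} (G : SimpleGraph V) (L : V → Finset ℕ) where
  M : V → ℕ → V → ℕ → Prop
  symm : ∀ u i v j, M u i v j → M v j u i
  adj : ∀ u i v j, M u i v j → G.Adj u v
  mem_left : ∀ u i v j, M u i v j → i ∈ L u
  mem_right : ∀ u i v j, M u i v j → j ∈ L v
  right_unique : ∀ u i v j j', M u i v j → M u i v j' → j = j'
  left_unique : ∀ u i i' v j, M u i v j → M u i' v j → i = i'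

/-- The cover graph `G_L`: each fiber `{v} × L v` is a clique, and between fibers of
adjacent vertices the edges are exactly those of the matching. -/
def coverGraph {V : Type} (G : SimpleGraph V) (L : V → Finset ℕ)
    (MA : MatchingAssignment G L) : SimpleGraph (V × ℕ) where
  Adj p q := (p.1 = q.1 ∧ p.2 ≠ q.2 ∧ p.2 ∈ L p.1 ∧ q.2 ∈ L q.1) ∨ MA.M p.1 p.2 q.1 q.2
  symm := by
    constructor
    rintro p q (⟨h1, h2, h3, h4⟩ | h)
    · exact Or.inl ⟨h1.symm, fun h' => h2 h'.symm, h4, h3⟩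
    · exact Or.inr (MA.symm _ _ _ _ h)
  loopless := by
    constructor
    rintro p (⟨h1, h2, h3, h4⟩ | h)
    · exact h2 rfl
    · exact (MA.adj _ _ _ _ h).ne rfl

/-- An independent set in a simple graph. -/
def SimpleGraph.IsIndepSet' {α : Type} (H : SimpleGraph α) (I : Set α) : Prop :=
  ∀ p ∈ I, ∀ q ∈ I, ¬ H.Adj p q

/-- `G` is DP-`k`-colorable: for every list assignment with lists of size `k` and every
matching assignment, the cover graph contains an independent set of size `|V(G)|`
(with all its vertices in the fibers). -/
def DPColorable {V : Type} [Fintype V] [DecidableEq V] (G : SimpleGraph V) (k : ℕ) : Prop :=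
  ∀ L : V → Finset ℕ, (∀ v, (L v).card = k) → ∀ MA : MatchingAssignment G L,
    ∃ I : Finset (V × ℕ), I.card = Fintype.card V ∧ (∀ p ∈ I, p.2 ∈ L p.1) ∧
      (coverGraph G L MA).IsIndepSet' ↑I

/-- The DP-chromatic number. -/
noncomputable def dpChromaticNumber {V : Type} [Fintype V] [DecidableEq V]
    (G : SimpleGraph V) : ℕ :=
  sInf {k | DPColorable G k}

/-- `G` is `k`-choosable. -/
def Choosable {V : Type} (G : SimpleGraph V) (k : ℕ) : Prop :=
  ∀ L : V → Finset ℕ, (∀ v, k ≤ (L v).card) →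
    ∃ c : V → ℕ, (∀ v, c v ∈ L v) ∧ ∀ u v, G.Adj u v → c u ≠ c v

/-- The list chromatic number. -/
noncomputable def listChromaticNumber {V : Type} (G : SimpleGraph V) : ℕ :=
  sInf {k | Choosable G k}

/-!
Color `v₁` first, with a color of `A(v₁)` matched to no color of `A(v_ℓ)`: the matching between
the fibers of `v₁` and `v_ℓ` is injective and `|A(v_ℓ)| < |A(v₁)|`. Then color `v₂, …, v_{ℓ-1}`
greedily, each of them seeing at most `k - 1` colored neighbors, each forbidding at most one color.
Finally, each neighbor of `v_ℓ` in `G - H` removes at most one color of `L(v_ℓ)` in forming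
`A(v_ℓ)`, so `d(v_ℓ) ≤ k` leaves `v_ℓ` at most `|A(v_ℓ)|` neighbors in `H`. One of them is `v₁`,
which blocks nothing in `A(v_ℓ)`, so some color of `A(v_ℓ)` survives for `v_ℓ`.
-/

open Function Finset

theorem Finset.card_filter_exists_le {α β : Type*} {R : α → β → Prop}
    (hR : ∀ a b b', R a b → R a b' → b = b') (T : Finset α) (s : Finset β)
    [DecidablePred fun b => ∃ a ∈ T, R a b] :
    #{b ∈ s | ∃ a ∈ T, R a b} ≤ #T := by
  classical
  calc #{b ∈ s | ∃ a ∈ T, R a b}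
      ≤ #(T.biUnion fun a => {b ∈ s | R a b}) := card_le_card fun b hb => by
        obtain ⟨hbs, a, haT, hab⟩ := mem_filter.1 hb
        exact mem_biUnion.2 ⟨a, haT, mem_filter.2 ⟨hbs, hab⟩⟩
    _ ≤ ∑ a ∈ T, #{b ∈ s | R a b} := card_biUnion_le
    _ ≤ ∑ _a ∈ T, 1 := sum_le_sum fun a _ => card_le_one.2 fun b hb b' hb' =>
        hR a b b' (mem_filter.1 hb).2 (mem_filter.1 hb').2
    _ = #T := by simp

section FirstVerts

variable {V : Type*}

def firstVerts {ℓ : ℕ} (w : Fin ℓ → V) (a : ℕ) : Set V :=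
  {v | ∃ j : Fin ℓ, (j : ℕ) < a ∧ v = w j}

theorem firstVerts_mono {ℓ : ℕ} (w : Fin ℓ → V) {a b : ℕ} (h : a ≤ b) :
    firstVerts w a ⊆ firstVerts w b := fun _ ⟨j, hj, hv⟩ => ⟨j, hj.trans_le h, hv⟩

@[simp]
theorem firstVerts_zero {ℓ : ℕ} (w : Fin ℓ → V) : firstVerts w 0 = ∅ := by
  simp [firstVerts]

theorem firstVerts_succ {ℓ : ℕ} (w : Fin ℓ → V) {b : ℕ} (hb : b < ℓ) :
    firstVerts w (b + 1) = insert (w ⟨b, hb⟩) (firstVerts w b) := by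
  ext v
  simp only [firstVerts, Set.mem_insert_iff]
  constructor
  · rintro ⟨j, hj, rfl⟩
    rcases Nat.lt_succ_iff_lt_or_eq.1 hj with hj | hj
    · exact Or.inr ⟨j, hj, rfl⟩
    · exact Or.inl (congrArg w (Fin.ext hj))
  · rintro (rfl | ⟨j, hj, rfl⟩)
    · exact ⟨⟨b, hb⟩, b.lt_succ_self, rfl⟩
    · exact ⟨j, hj.trans b.lt_succ_self, rfl⟩

theorem firstVerts_one {ℓ : ℕ} (w : Fin ℓ → V) (hℓ : 0 < ℓ) :
    firstVerts w 1 = {w ⟨0, hℓ⟩} := by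
  rw [firstVerts_succ w hℓ, firstVerts_zero, insert_empty_eq]

theorem insert_last_firstVerts {ℓ : ℕ} (w : Fin ℓ → V) (hℓ : 0 < ℓ) :
    insert (w ⟨ℓ - 1, by omega⟩) (firstVerts w (ℓ - 1)) = Set.range w := by
  rw [← firstVerts_succ, Nat.sub_add_cancel hℓ]
  ext v
  exact ⟨fun ⟨j, _, hv⟩ => ⟨j, hv.symm⟩, fun ⟨j, hv⟩ => ⟨j, j.isLt, hv.symm⟩⟩

theorem apply_notMem_firstVerts {ℓ : ℕ} {w : Fin ℓ → V} (hw : Injective w) {b : ℕ}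
    (hb : b < ℓ) : w ⟨b, hb⟩ ∉ firstVerts w b :=
  fun ⟨_, hj, hv⟩ => hj.ne (congrArg Fin.val (hw hv)).symm

end FirstVerts

namespace MatchingAssignment

variable {V : Type} {G : SimpleGraph V} {L : V → Finset ℕ} (MA : MatchingAssignment G L)

def IsColoringOn (col : V → ℕ) (D : Set V) : Prop :=
  (∀ v ∈ D, col v ∈ L v) ∧ ∀ u ∈ D, ∀ v ∈ D, ¬ MA.M u (col u) v (col v)

open Classical in
/-- For `D = V(G - H)` this is the paper's `A(v)`. -/
noncomputable def free (col : V → ℕ) (D : Set V) (v : V) : Finset ℕ :=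
  {i ∈ L v | ∀ u ∈ D, ¬ MA.M u (col u) v i}

variable {MA} {col col' : V → ℕ} {D : Set V} {u v : V} {x : ℕ}

theorem mem_free : x ∈ MA.free col D v ↔ x ∈ L v ∧ ∀ u ∈ D, ¬ MA.M u (col u) v x := by
  simp [free]

theorem coe_free :
    (MA.free col D v : Set ℕ) = {i | i ∈ L v ∧ ∀ u ∈ D, G.Adj u v → ¬ MA.M u (col u) v i} := by
  ext i
  simpa [mem_free] using fun _ =>
    ⟨fun h u hu _ => h u hu, fun h u hu hM => h u hu (MA.adj _ _ _ _ hM) hM⟩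

theorem free_subset : MA.free col D v ⊆ L v := fun _ hx => (mem_free.1 hx).1

theorem free_congr (h : ∀ u ∈ D, col u = col' u) : MA.free col D v = MA.free col' D v := by
  ext x
  simp +contextual only [mem_free, h]

theorem IsColoringOn.update [DecidableEq V] (h : MA.IsColoringOn col D) (hv : v ∉ D)
    (hx : x ∈ MA.free col D v) :
    MA.IsColoringOn (Function.update col v x) (insert v D) := by
  have hcol : ∀ u ∈ D, Function.update col v x u = col u := fun u hu =>
    update_of_ne (ne_of_mem_of_not_mem hu hv) _ _
  refine ⟨?_, ?_⟩
  · rintro u (rfl | hu)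
    · simpa using (mem_free.1 hx).1
    · simpa [hcol u hu] using h.1 u hu
  · rintro u (rfl | hu) u' (rfl | hu') hM
    · exact (MA.adj _ _ _ _ hM).ne rfl
    · rw [update_self, hcol u' hu'] at hM
      exact (mem_free.1 hx).2 u' hu' (MA.symm _ _ _ _ hM)
    · rw [update_self, hcol u hu] at hM
      exact (mem_free.1 hx).2 u hu hM
    · rw [hcol u hu, hcol u' hu'] at hM
      exact h.2 u hu u' hu' hM

variable (MA)

open Classical in
theorem card_filter_matched_le (col : V → ℕ) (N : Finset V) (v : V) (s : Finset ℕ) :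
    #{i ∈ s | ∃ u ∈ N, MA.M u (col u) v i} ≤ #N :=
  card_filter_exists_le (fun u => MA.right_unique u (col u) v) N s

theorem card_le_card_free_add {N : Finset V} (hN : ∀ u ∈ D, G.Adj u v → u ∈ N) :
    #(L v) ≤ #(MA.free col D v) + #N := by
  classical
  have hsub : L v \ MA.free col D v ⊆ {i ∈ L v | ∃ u ∈ N, MA.M u (col u) v i} := by
    intro i hi
    obtain ⟨hiL, hifree⟩ := mem_sdiff.1 hi
    obtain ⟨u, hu, hM⟩ : ∃ u ∈ D, MA.M u (col u) v i := by
      simpa [mem_free, hiL] using hifree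
    exact mem_filter.2 ⟨hiL, u, hN u hu (MA.adj _ _ _ _ hM), hM⟩
  rw [← card_sdiff_add_card_eq_card free_subset, add_comm]
  exact Nat.add_le_add_left ((card_le_card hsub).trans (MA.card_filter_matched_le col N v _)) _

variable {MA}

theorem exists_mem_free_forall_not_M {T : Finset ℕ} (h : #T < #(MA.free col D u)) (v : V) :
    ∃ x ∈ MA.free col D u, ∀ j ∈ T, ¬ MA.M u x v j := by
  classical
  have hP : #{x ∈ MA.free col D u | ∃ j ∈ T, MA.M u x v j} < #(MA.free col D u) :=
    (card_filter_exists_le (fun j x x' hx hx' => MA.left_unique u x x' v j hx hx') T _).trans_lt h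
  obtain ⟨x, hx, hxP⟩ := exists_mem_notMem_of_card_lt_card hP
  exact ⟨x, hx, fun j hj hM => hxP (mem_filter.2 ⟨hx, j, hj, hM⟩)⟩

theorem IsColoringOn.exists_update_of_card_lt [DecidableEq V] (h : MA.IsColoringOn col D)
    (hv : v ∉ D) {N : Finset V} (hN : ∀ u ∈ D, G.Adj u v → u ∈ N) (hcard : #N < #(L v)) :
    ∃ x, MA.IsColoringOn (Function.update col v x) (insert v D) := by
  obtain ⟨x, hx⟩ : (MA.free col D v).Nonempty := by
    have := MA.card_le_card_free_add (col := col) hN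
    exact card_pos.1 (by omega)
  exact ⟨x, h.update hv hx⟩

theorem IsColoringOn.exists_extend_greedy [Finite V] [DecidableEq V] {ℓ : ℕ} {w : Fin ℓ → V}
    (hw : Injective w) (hwD : ∀ i, w i ∉ D) {a b : ℕ} (hab : a ≤ b) (hb : b ≤ ℓ)
    (h : MA.IsColoringOn col (D ∪ firstVerts w a))
    (hdeg : ∀ i : Fin ℓ, a ≤ i → (i : ℕ) < b →
      {u | G.Adj (w i) u ∧ u ∈ D ∪ firstVerts w i}.ncard < #(L (w i))) :
    ∃ col', MA.IsColoringOn col' (D ∪ firstVerts w b) ∧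
      ∀ v ∈ D ∪ firstVerts w a, col' v = col v := by
  induction b, hab using Nat.le_induction with
  | base => exact ⟨col, h, fun _ _ => rfl⟩
  | succ b hab ih =>
    obtain ⟨col', hcol', hagree⟩ :=
      ih (b.le_succ.trans hb) fun i hai hib => hdeg i hai (hib.trans b.lt_succ_self)
    set v := w ⟨b, hb⟩
    have hv : v ∉ D ∪ firstVerts w b :=
      fun hv => hv.elim (hwD _) (apply_notMem_firstVerts hw hb)
    let N := (Set.toFinite {u | G.Adj v u ∧ u ∈ D ∪ firstVerts w b}).toFinset
    have hN : ∀ u ∈ D ∪ firstVerts w b, G.Adj u v → u ∈ N := fun u hu hadj =>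
      (Set.Finite.mem_toFinset _).2 ⟨hadj.symm, hu⟩
    have hcard : #N < #(L v) := by
      rw [← Set.ncard_eq_toFinset_card]
      exact hdeg ⟨b, hb⟩ hab b.lt_succ_self
    obtain ⟨x, hx⟩ := hcol'.exists_update_of_card_lt hv hN hcard
    refine ⟨Function.update col' v x, ?_, fun u hu => ?_⟩
    · rwa [firstVerts_succ w hb, Set.union_insert]
    · have hu' : u ∈ D ∪ firstVerts w b :=
        Set.union_subset_union_right D (firstVerts_mono w hab) hu
      rw [Function.update_of_ne (ne_of_mem_of_not_mem hu' hv), hagree u hu]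

theorem IsColoringOn.exists_update_of_degree_le [Fintype V] [DecidableEq V] [DecidableRel G.Adj]
    {E : Set V} {t v₀ : V} (h : MA.IsColoringOn col D) (ht : t ∉ D)
    (hdeg : G.degree t ≤ #(L t)) (hadj : G.Adj v₀ t) (hv₀ : v₀ ∉ E)
    (hv₀t : ∀ j ∈ MA.free col E t, ¬ MA.M v₀ (col v₀) t j) :
    ∃ x, MA.IsColoringOn (Function.update col t x) (insert t D) := by
  classical
  set Nin := {u ∈ G.neighborFinset t | u ∈ E}
  set Nout := {u ∈ G.neighborFinset t | u ∉ E}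
  have hsplit : #Nin + #Nout = G.degree t := by
    rw [← G.card_neighborFinset_eq_degree]
    exact card_filter_add_card_filter_not _
  have hfree : #(L t) ≤ #(MA.free col E t) + #Nin :=
    MA.card_le_card_free_add fun u hu hut => by simp [Nin, hu, hut.symm]
  have hv₀N : v₀ ∈ Nout := by simp [Nout, hv₀, hadj.symm]
  have hB : #{i ∈ MA.free col E t | ∃ u ∈ Nout.erase v₀, MA.M u (col u) t i}
      < #(MA.free col E t) :=
    (MA.card_filter_matched_le col _ t _).trans_lt
      ((card_erase_lt_of_mem hv₀N).trans_le (by omega))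
  obtain ⟨x, hx, hxB⟩ := exists_mem_notMem_of_card_lt_card hB
  refine ⟨x, h.update ht (mem_free.2 ⟨(mem_free.1 hx).1, fun u _ hM => ?_⟩)⟩
  by_cases huE : u ∈ E
  · exact (mem_free.1 hx).2 u huE hM
  by_cases hu₀ : u = v₀
  · exact hv₀t x hx (hu₀ ▸ hM)
  have huN : u ∈ Nout.erase v₀ :=
    mem_erase.2 ⟨hu₀, by simp [Nout, huE, (MA.adj _ _ _ _ hM).symm]⟩
  exact hxB (mem_filter.2 ⟨hx, u, huN, hM⟩)

end MatchingAssignment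

/-- the near-degenerate extension lemma: under conditions (1)-(4), a
DP-`k`-coloring of `G - H` extends to a DP-`k`-coloring of `G`. -/
theorem stmt_11 {V : Type} [Fintype V] [DecidableEq V] (G : SimpleGraph V) [DecidableRel G.Adj]
    (k : ℕ) (L : V → Finset ℕ) (hL : ∀ v, (L v).card = k)
    (MA : MatchingAssignment G L)
    (ℓ : ℕ) (hℓ : 2 ≤ ℓ) (w : Fin ℓ → V) (hw : Function.Injective w)
    (S : Finset V) (hS : S = Finset.univ.image w)
    (c : V → ℕ)
    (hc_mem : ∀ v ∉ S, c v ∈ L v)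
    (hc_proper : ∀ u ∉ S, ∀ v, v ∉ S → G.Adj u v → ¬ MA.M u (c u) v (c v))
    (A : V → Set ℕ)
    (hA : ∀ v, A v = {i | i ∈ L v ∧ ∀ u ∉ S, G.Adj u v → ¬ MA.M u (c u) v i})
    (h1 : G.Adj (w ⟨0, by omega⟩) (w ⟨ℓ - 1, by omega⟩))
    (h1' : (A (w ⟨ℓ - 1, by omega⟩)).ncard < (A (w ⟨0, by omega⟩)).ncard)
    (h2 : G.degree (w ⟨ℓ - 1, by omega⟩) ≤ k)
    (h3 : ∀ i : Fin ℓ, 1 ≤ (i : ℕ) → (i : ℕ) ≤ ℓ - 2 →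
      {u | G.Adj (w i) u ∧ (u ∉ S ∨ ∃ j : Fin ℓ, (j : ℕ) < (i : ℕ) ∧ u = w j)}.ncard ≤ k - 1) :
    ∃ c' : V → ℕ, (∀ v, c' v ∈ L v) ∧ (∀ v ∉ S, c' v = c v) ∧
      ∀ u v, G.Adj u v → ¬ MA.M u (c' u) v (c' v) := by
  set E : Set V := {u | u ∉ S}
  set v₀ := w ⟨0, by omega⟩
  set t := w ⟨ℓ - 1, by omega⟩
  have hwS : ∀ i, w i ∈ S := fun i => hS ▸ mem_image_of_mem w (mem_univ i)
  have hA_free : ∀ v, A v = MA.free c E v :=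
    fun v => (hA v).trans MatchingAssignment.coe_free.symm
  rw [hA_free, hA_free, Set.ncard_coe_finset, Set.ncard_coe_finset] at h1'
  have hk : 1 ≤ k := by
    have : #(MA.free c E v₀) ≤ k := hL v₀ ▸ card_le_card MatchingAssignment.free_subset
    omega
  have hc : MA.IsColoringOn c E :=
    ⟨hc_mem, fun u hu v hv hM => hc_proper u hu v hv (MA.adj _ _ _ _ hM) hM⟩
  obtain ⟨x₀, hx₀, hx₀t⟩ := MatchingAssignment.exists_mem_free_forall_not_M h1' t
  have hc₀ : MA.IsColoringOn (Function.update c v₀ x₀) (E ∪ firstVerts w 1) := by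
    rw [firstVerts_one w (by omega), Set.union_singleton]
    exact hc.update (· (hwS _)) hx₀
  obtain ⟨col, hcol, hagree⟩ := hc₀.exists_extend_greedy hw (fun i (h : w i ∈ E) => h (hwS i))
    (a := 1) (b := ℓ - 1) (by omega) (by omega)
    fun i h1i hi => (h3 i h1i (by omega)).trans_lt (by rw [hL]; omega)
  have hcol_E : ∀ v ∈ E, col v = c v := fun v hv => by
    rw [hagree v (Or.inl hv), Function.update_of_ne (ne_of_mem_of_not_mem (hwS _) hv).symm]
  have hcol_v₀ : col v₀ = x₀ := by
    rw [hagree v₀ (Or.inr ⟨⟨0, by omega⟩, Nat.one_pos, rfl⟩), Function.update_self]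
  have ht : t ∉ E ∪ firstVerts w (ℓ - 1) :=
    fun h => h.elim (· (hwS _)) (apply_notMem_firstVerts hw _)
  obtain ⟨x, hfinal⟩ := hcol.exists_update_of_degree_le ht (hL t ▸ h2) h1
    (fun (h : v₀ ∈ E) => h (hwS _)) (by rwa [MatchingAssignment.free_congr hcol_E, hcol_v₀])
  have huniv : insert t (E ∪ firstVerts w (ℓ - 1)) = Set.univ := by
    rw [← Set.union_insert, insert_last_firstVerts w (by omega)]
    refine Set.eq_univ_of_forall fun v => (em (v ∈ S)).elim (fun hv => Or.inr ?_) Or.inl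
    simpa [hS] using hv
  rw [huniv] at hfinal
  refine ⟨Function.update col t x, fun v => hfinal.1 v trivial, fun v hv => ?_,
    fun u v _ => hfinal.2 u trivial v trivial⟩
  rw [Function.update_of_ne (ne_of_mem_of_not_mem (hwS _) hv).symm, hcol_E v hv]
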